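/- arXiv:2209.14625 — 8 statements merged into one kernel-verified Lean document; each statement's English description precedes it below -/
import Mathlib

section
/- If f(x,y) is an invariant function (i.e., for all x ∈ ℝ, y > 0, and n ∈ ℤ⁺, ∑_{r=0}^{n-1} f(x+ry, ny) = f(x,y)), then for all x and y > 0 and all n ∈ ℤ⁺, f(x+y,y) - f(x,y) = f(x + y/n, y/n) - f(x, y/n). -/
open Finset

theorem stmt_0 (f : ℝ → ℝ → ℝ)
    (hf : ∀ n : ℕ, 0 < n → ∀ x y : ℝ, 0 < y →
      ∑ r ∈ Finset.range n, f (x + r * y) (n * y) = f x y) :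
    ∀ x y : ℝ, 0 < y → ∀ n : ℕ, 0 < n →
      f (x + y) y - f x y = f (x + y / n) (y / n) - f x (y / n) := by
  intro x y hy n hn
  have hn0 : (n : ℝ) ≠ 0 := Nat.cast_ne_zero.mpr hn.ne'
  have hyn : 0 < y / n := div_pos hy (by positivity)
  set g : ℕ → ℝ := fun r => f (x + r * (y / n)) y with hg
  have hny : (n : ℝ) * (y / n) = y := by field_simp
  have hA : ∑ r ∈ Finset.range n, g r = f x (y / n) := by
    have := hf n hn x (y / n) hyn
    rw [hny] at this
    exact this
  have hB : ∑ r ∈ Finset.range n, g (r + 1) = f (x + y / n) (y / n) := by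
    have := hf n hn (x + y / n) (y / n) hyn
    rw [hny] at this
    rw [← this]
    apply Finset.sum_congr rfl
    intro r _
    simp only [hg]
    push_cast
    ring_nf
  have h1 := Finset.sum_range_succ' g n
  have h2 := Finset.sum_range_succ g n
  have hgn : g n = f (x + y) y := by
    simp only [hg]
    rw [mul_div_assoc'] at hny ⊢
    rw [hny]
  have hg0 : g 0 = f x y := by simp [hg]
  have : f (x + y) y - f x y = (∑ r ∈ Finset.range n, g (r + 1)) - ∑ r ∈ Finset.range n, g r := by
    rw [← hgn, ← hg0]; linarith
  rw [this, hA, hB]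
end

section
/- If f(x,y) is an invariant function and t ∈ ℝ, then the function f₁(x,y) = f(y·{(t+x)/y}, y), where {u} denotes the fractional part of u, is also an invariant function. -/
/-!
Write `u = (t + x) / y`. The `r`-th term of the invariance sum of `f₁` at `(x, n y)` is
`f (n y {(u + r) / n}) (n y)`. Since `k ↦ {({u} + k) / n}` is `n`-periodic on `ℤ` and
`u + r = {u} + (⌊u⌋ + r)`, the values `{(u + r) / n}`, `r < n`, are a rearrangement of
`({u} + s) / n`, `s < n`. So the sum is `∑ s < n, f (y {u} + s y) (n y) = f (y {u}) y = f₁ x y`.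
-/

open Finset

theorem Function.Periodic.sum_range_int_add {M : Type*} [AddCommMonoid M] {G : ℤ → M} {n : ℕ}
    (hG : Function.Periodic G n) (m : ℤ) :
    ∑ r ∈ range n, G (m + r) = ∑ r ∈ range n, G r := by
  have step : ∀ m : ℤ, ∑ r ∈ range n, G (m + 1 + r) = ∑ r ∈ range n, G (m + r) := by
    intro m
    rcases n with _ | k
    · simp
    rw [sum_range_succ, sum_range_succ']
    push_cast
    have hwrap : G (m + 1 + k) = G (m + 0) := by
      rw [add_zero, ← hG m]
      push_cast
      ring_nf
    rw [hwrap]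
    congr 1
    exact sum_congr rfl fun r _ => by ring_nf
  induction m using Int.induction_on with
  | zero => simp
  | succ i ih => rw [step, ih]
  | pred i ih => rw [← ih, ← step, sub_add_cancel]

theorem sum_range_comp_fract_add_div {M : Type*} [AddCommMonoid M] (g : ℝ → M) (n : ℕ) (u : ℝ) :
    ∑ r ∈ range n, g (Int.fract ((u + r) / n)) = ∑ r ∈ range n, g ((Int.fract u + r) / n) := by
  set G : ℤ → M := fun k => g (Int.fract ((Int.fract u + k) / n))
  have hG : Function.Periodic G n := by
    intro k
    rcases n.eq_zero_or_pos with rfl | hn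
    · simp
    have : (Int.fract u + ((k + n : ℤ) : ℝ)) / n = (Int.fract u + k) / n + 1 := by
      push_cast
      field_simp
      ring
    simp only [G, this, Int.fract_add_one]
  calc ∑ r ∈ range n, g (Int.fract ((u + r) / n))
      = ∑ r ∈ range n, G (⌊u⌋ + r) := by
        refine sum_congr rfl fun r _ => ?_
        simp only [G]
        push_cast
        rw [← add_assoc, add_comm (Int.fract u), Int.floor_add_fract]
    _ = ∑ r ∈ range n, G r := hG.sum_range_int_add _
    _ = ∑ r ∈ range n, g ((Int.fract u + r) / n) := by
        refine sum_congr rfl fun r hr => ?_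
        have hrn : (r : ℝ) + 1 ≤ n := by exact_mod_cast mem_range.mp hr
        have hn : (0 : ℝ) < n := by linarith [r.cast_nonneg (α := ℝ)]
        simp only [G, Int.cast_natCast]
        rw [Int.fract_eq_self.mpr ⟨by positivity, ?_⟩]
        rw [div_lt_one hn]
        linarith [Int.fract_lt_one u]

theorem stmt_4 (f : ℝ → ℝ → ℝ)
    (hf : ∀ n : ℕ, 0 < n → ∀ x y : ℝ, 0 < y →
      ∑ r ∈ Finset.range n, f (x + r * y) (n * y) = f x y)
    (t : ℝ) (f₁ : ℝ → ℝ → ℝ)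
    (hf₁ : ∀ x y : ℝ, f₁ x y = f (y * Int.fract ((t + x) / y)) y) :
    ∀ n : ℕ, 0 < n → ∀ x y : ℝ, 0 < y →
      ∑ r ∈ Finset.range n, f₁ (x + r * y) (n * y) = f₁ x y := by
  intro n hn x y hy
  have hn' : (n : ℝ) ≠ 0 := by positivity
  set u := (t + x) / y
  calc ∑ r ∈ range n, f₁ (x + r * y) (n * y)
      = ∑ r ∈ range n, f (n * y * Int.fract ((u + r) / n)) (n * y) := by
        refine sum_congr rfl fun r _ => ?_
        have : (t + (x + r * y)) / (n * y) = (u + r) / n := by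
          simp only [u]
          field_simp
          ring
        rw [hf₁, this]
    _ = ∑ r ∈ range n, f (n * y * ((Int.fract u + r) / n)) (n * y) :=
        sum_range_comp_fract_add_div (fun v => f (n * y * v) (n * y)) n u
    _ = ∑ r ∈ range n, f (y * Int.fract u + r * y) (n * y) := by
        refine sum_congr rfl fun r _ => ?_
        congr 1
        field_simp
    _ = f₁ x y := by rw [hf n hn _ y hy, hf₁]
end

section
/- For r > 0 with r ≠ 1, the function f(x,y) = log(1 - 2·r^{1/y}·cos(2πx/y) + r^{2/y}) is an invariant function: ∑_{j=0}^{n-1} log(1 - 2 r^{1/(ny)} cos(2π(x+jy)/(ny)) + r^{2/(ny)}) = log(1 - 2 r^{1/y} cos(2πx/y) + r^{2/y}) for all positive integers n, all x ∈ ℝ, y > 0. -/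
/-!
Write `ρ = r ^ (1 / (n y))` and `z = ρ e^{2πix/(ny)}`. The `j`-th summand is
`log |1 - ζ^j z|²` with `ζ = e^{2πi/n}`, so the sum is `log |∏ⱼ (1 - ζ^j z)|² = log |1 - z^n|²`,
and `z^n = r ^ (1 / y) e^{2πix/y}` gives the right-hand side. All the factors are nonzero because
`|z^n| = r ^ (1 / y) ≠ 1`.
-/

open Real

theorem IsPrimitiveRoot.prod_one_sub_pow_mul {R : Type*} [CommRing R] [IsDomain R] {ζ : R}
    {n : ℕ} (hζ : IsPrimitiveRoot ζ n) (hn : 0 < n) (z : R) :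
    ∏ j ∈ Finset.range n, (1 - ζ ^ j * z) = 1 - z ^ n := by
  simpa [Polynomial.eval_prod] using
    (congrArg (Polynomial.eval 1) (X_pow_sub_C_eq_prod hζ hn rfl)).symm

theorem Complex.normSq_one_sub_ofReal_mul_exp (s θ : ℝ) :
    Complex.normSq (1 - s * Complex.exp (θ * Complex.I)) = 1 - 2 * s * Real.cos θ + s ^ 2 := by
  rw [Complex.exp_mul_I]
  simp only [normSq_apply, sub_re, one_re, mul_re, ofReal_re, add_re, cos_ofReal_re, sin_ofReal_re,
    I_re, mul_zero, sin_ofReal_im, I_im, mul_one, sub_self, add_zero, ofReal_im, add_im,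
    cos_ofReal_im, mul_im, zero_add, zero_mul, sub_zero, sub_im, one_im, zero_sub, mul_neg, neg_mul,
    neg_neg]
  linear_combination s ^ 2 * Real.sin_sq_add_cos_sq θ

theorem sum_log_one_sub_two_mul_cos_add_sq {n : ℕ} (hn : 0 < n) {ρ : ℝ} (hρ : |ρ| ≠ 1) (θ : ℝ) :
    ∑ j ∈ Finset.range n, log (1 - 2 * ρ * cos (θ + 2 * π * j / n) + ρ ^ 2)
      = log (1 - 2 * ρ ^ n * cos (n * θ) + (ρ ^ n) ^ 2) := by
  set z : ℂ := ρ * Complex.exp (θ * Complex.I)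
  set ζ : ℂ := Complex.exp (2 * π * Complex.I / n)
  have hζ : IsPrimitiveRoot ζ n := Complex.isPrimitiveRoot_exp n hn.ne'
  have hterm (j : ℕ) : 1 - 2 * ρ * cos (θ + 2 * π * j / n) + ρ ^ 2
      = Complex.normSq (1 - ζ ^ j * z) := by
    rw [← Complex.normSq_one_sub_ofReal_mul_exp, ← Complex.exp_nat_mul]
    congr 2
    rw [mul_left_comm, ← Complex.exp_add]
    push_cast
    ring_nf
  have hpow : z ^ n = ((ρ ^ n : ℝ) : ℂ) * Complex.exp ((n * θ : ℝ) * Complex.I) := by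
    rw [mul_pow, ← Complex.exp_nat_mul]
    push_cast
    ring_nf
  have hzn : z ^ n ≠ 1 := fun h => by
    have := congrArg (‖·‖) h
    simp only [hpow, norm_mul, Complex.norm_exp_ofReal_mul_I, Complex.norm_real, norm_pow,
      Real.norm_eq_abs, mul_one, norm_one] at this
    exact hρ ((pow_eq_one_iff_of_nonneg (abs_nonneg ρ) hn.ne').mp this)
  have hprod := hζ.prod_one_sub_pow_mul hn z
  have hfactor : ∀ j ∈ Finset.range n, Complex.normSq (1 - ζ ^ j * z) ≠ 0 := fun j hj =>
    Complex.normSq_eq_zero.not.mpr fun h0 => hzn <| by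
      refine (sub_eq_zero.mp ?_).symm
      rw [← hprod]
      exact Finset.prod_eq_zero hj h0
  simp_rw [hterm]
  rw [← log_prod hfactor, ← map_prod, hprod, hpow, Complex.normSq_one_sub_ofReal_mul_exp]

theorem stmt_11 (r : ℝ) (hr : 0 < r) (hr1 : r ≠ 1) :
    ∀ n : ℕ, 0 < n → ∀ x y : ℝ, 0 < y →
      ∑ j ∈ Finset.range n,
          Real.log (1 - 2 * r ^ (1 / ((n : ℝ) * y)) * Real.cos (2 * π * (x + j * y) / ((n : ℝ) * y))
            + r ^ (2 / ((n : ℝ) * y)))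
        = Real.log (1 - 2 * r ^ (1 / y) * Real.cos (2 * π * x / y) + r ^ (2 / y)) := by
  intro n hn x y hy
  set ρ := r ^ (1 / ((n : ℝ) * y))
  have hρ : |ρ| ≠ 1 := by
    rw [abs_of_pos (rpow_pos_of_pos hr _)]
    intro h
    have hroot : r = (r ^ (1 / ((n : ℝ) * y))) ^ ((n : ℝ) * y) := by
      rw [← rpow_mul hr.le, one_div_mul_cancel (by positivity), rpow_one]
    exact hr1 (by rw [hroot, h, one_rpow])
  have hrpow (k : ℕ) (e : ℝ) (he : e = k / ((n : ℝ) * y)) : r ^ e = ρ ^ k := by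
    rw [← rpow_natCast, ← rpow_mul hr.le, he]
    ring_nf
  have harg (j : ℕ) : 2 * π * (x + j * y) / (n * y) = 2 * π * x / (n * y) + 2 * π * j / n := by
    field_simp
  rw [hrpow 2 _ (by push_cast; ring), hrpow n (1 / y) (by field_simp), hrpow (2 * n) (2 / y)
    (by push_cast; field_simp), pow_mul', show 2 * π * x / y = n * (2 * π * x / (n * y)) by
    field_simp]
  simp_rw [harg]
  exact sum_log_one_sub_two_mul_cos_add_sq hn hρ _
end

section
/- Define f(x,y) = log|2 sin(πx/y)| if x/y ∉ ℤ and f(x,y) = -log y if x/y ∈ ℤ (for y > 0). Then f is an invariant function: ∑_{r=0}^{n-1} f(x+ry, ny) = f(x,y) for all n ∈ ℤ⁺, x ∈ ℝ, y > 0. -/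
/-!
Put t = x / y, so that the r-th summand has ratio (t + r) / n. If t ∉ ℤ, none of these ratios
is an integer and the sum is the logarithm of ∏ r < n, |2 sin (π (t + r) / n)| = |2 sin (π t)|,
which is the norm of X ^ n - 1 = ∏ r < n, (X - ζ ^ r) evaluated at exp (-2πit/n). If t ∈ ℤ,
the sum is y-periodic in x, so one may take x = 0: the term r = 0 is -log (n y) and the others
add up to log ∏ 0 < k < n, |2 sin (π k / n)| = log n.
-/

open Real Finset
lemma norm_exp_I_mul_sub_exp_I_mul (a b : ℝ) :
    ‖Complex.exp (Complex.I * a) - Complex.exp (Complex.I * b)‖ = |2 * sin ((a - b) / 2)| := by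
  have h : Complex.exp (Complex.I * a) - Complex.exp (Complex.I * b) =
      Complex.exp (Complex.I * b) * (Complex.exp (Complex.I * (a - b : ℝ)) - 1) := by
    rw [mul_sub, mul_one, ← Complex.exp_add]; push_cast; ring_nf
  rw [h, norm_mul, Complex.norm_exp_I_mul_ofReal, one_mul,
    Complex.norm_exp_I_mul_ofReal_sub_one, Real.norm_eq_abs]

lemma exp_two_pi_I_div_pow (n r : ℕ) :
    Complex.exp (2 * π * Complex.I / n) ^ r = Complex.exp (Complex.I * (2 * π * r / n : ℝ)) := by
  rw [← Complex.exp_nat_mul]; congr 1; push_cast; ring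

lemma prod_abs_two_sin_pi_mul_add_div {n : ℕ} (hn : n ≠ 0) (u : ℝ) :
    ∏ r ∈ range n, |2 * sin (π * ((u + r) / n))| = |2 * sin (π * u)| := by
  have hfactor := congrArg (fun p => ‖p.eval (Complex.exp (Complex.I * (-2 * π * u / n : ℝ)))‖)
    (X_pow_sub_C_eq_prod (Complex.isPrimitiveRoot_exp n hn) (Nat.pos_of_ne_zero hn) (one_pow n))
  have hpow : Complex.exp (Complex.I * (-2 * π * u / n : ℝ)) ^ n =
      Complex.exp (Complex.I * (-2 * π * u : ℝ)) := by
    rw [← Complex.exp_nat_mul]; congr 1; push_cast; field_simp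
  simp only [Polynomial.eval_prod, Polynomial.eval_sub, Polynomial.eval_pow, Polynomial.eval_X,
    Polynomial.eval_C, mul_one, norm_prod, hpow, exp_two_pi_I_div_pow,
    Complex.norm_exp_I_mul_ofReal_sub_one, norm_exp_I_mul_sub_exp_I_mul, Real.norm_eq_abs]
    at hfactor
  convert hfactor.symm using 1
  · refine prod_congr rfl fun r _ => ?_
    rw [← abs_neg, ← mul_neg, ← sin_neg]; congr 3; ring
  · rw [← abs_neg, ← mul_neg, ← sin_neg]; congr 3; ring

lemma prod_abs_two_sin_pi_mul_div (n : ℕ) :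
    ∏ k ∈ range n, |2 * sin (π * ((k + 1) / (n + 1)))| = n + 1 := by
  have hnorm := congrArg norm
    (Complex.isPrimitiveRoot_exp (n + 1) n.succ_ne_zero).prod_one_sub_pow_eq_order
  rw [norm_prod] at hnorm
  convert hnorm using 1
  · refine prod_congr rfl fun k _ => ?_
    rw [norm_sub_rev, exp_two_pi_I_div_pow, Complex.norm_exp_I_mul_ofReal_sub_one,
      Real.norm_eq_abs]
    congr 3; push_cast; ring
  · norm_cast

lemma two_sin_pi_mul_ne_zero {t : ℝ} (ht : ¬∃ k : ℤ, t = k) : 2 * sin (π * t) ≠ 0 := by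
  refine mul_ne_zero two_ne_zero fun hsin => ht ?_
  obtain ⟨k, hk⟩ := sin_eq_zero_iff.mp hsin
  exact ⟨k, (mul_left_cancel₀ pi_ne_zero (by rw [← hk, mul_comm])).symm⟩

lemma not_exists_int_eq_of_pos_of_lt_one {t : ℝ} (h0 : 0 < t) (h1 : t < 1) :
    ¬∃ k : ℤ, t = k := by
  rintro ⟨k, rfl⟩
  norm_cast at h0 h1
  omega

open scoped Classical in
noncomputable def logTwoSin (x y : ℝ) : ℝ :=
  if ∃ k : ℤ, x / y = k then -log y else log |2 * sin (π * (x / y))|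

lemma logTwoSin_of_int {x y : ℝ} (h : ∃ k : ℤ, x / y = k) : logTwoSin x y = -log y :=
  if_pos h

lemma logTwoSin_of_not_int {x y : ℝ} (h : ¬∃ k : ℤ, x / y = k) :
    logTwoSin x y = log |2 * sin (π * (x / y))| :=
  if_neg h

lemma logTwoSin_add_self (x y : ℝ) : logTwoSin (x + y) y = logTwoSin x y := by
  rcases eq_or_ne y 0 with rfl | hy
  · rw [add_zero]
  have hdiv : (x + y) / y = x / y + 1 := by field_simp
  have hint : (∃ k : ℤ, (x + y) / y = k) ↔ ∃ k : ℤ, x / y = k := by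
    rw [hdiv]
    exact ⟨fun ⟨k, hk⟩ => ⟨k - 1, by push_cast; linarith⟩,
      fun ⟨k, hk⟩ => ⟨k + 1, by push_cast; linarith⟩⟩
  by_cases hx : ∃ k : ℤ, x / y = k
  · rw [logTwoSin_of_int hx, logTwoSin_of_int (hint.mpr hx)]
  · rw [logTwoSin_of_not_int hx, logTwoSin_of_not_int (mt hint.mp hx), hdiv, mul_add_one,
      sin_add_pi, mul_neg, abs_neg]

lemma periodic_sum_range_logTwoSin (n : ℕ) (y : ℝ) :
    Function.Periodic (fun x => ∑ r ∈ range n, logTwoSin (x + r * y) (n * y)) y := by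
  intro x
  have hshift := sum_range_succ' (fun r : ℕ => logTwoSin (x + r * y) (n * y)) n
  rw [sum_range_succ, logTwoSin_add_self x (n * y), Nat.cast_zero, zero_mul, add_zero,
    add_left_inj] at hshift
  refine (sum_congr rfl fun r _ => ?_).trans hshift.symm
  push_cast
  ring_nf

lemma sum_logTwoSin_of_not_int {ι : Type*} (s : Finset ι) (x y : ι → ℝ)
    (h : ∀ i ∈ s, ¬∃ k : ℤ, x i / y i = k) :
    ∑ i ∈ s, logTwoSin (x i) (y i) = log (∏ i ∈ s, |2 * sin (π * (x i / y i))|) := by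
  rw [log_prod fun i hi => abs_ne_zero.mpr (two_sin_pi_mul_ne_zero (h i hi))]
  exact sum_congr rfl fun i hi => logTwoSin_of_not_int (h i hi)

lemma sum_range_logTwoSin_mul_self {n : ℕ} (hn : n ≠ 0) {y : ℝ} (hy : y ≠ 0) :
    ∑ r ∈ range n, logTwoSin (r * y) (n * y) = -log y := by
  obtain ⟨m, rfl⟩ := Nat.exists_eq_add_one_of_ne_zero hn
  have hratio (k : ℕ) : ((k + 1 : ℕ) * y) / ((m + 1 : ℕ) * y) = (k + 1) / (m + 1) := by
    rw [mul_div_mul_right _ _ hy]; push_cast; rfl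
  have hlt : ∀ k ∈ range m, ¬∃ j : ℤ, ((k + 1 : ℕ) * y) / ((m + 1 : ℕ) * y) = j := by
    intro k hk
    rw [hratio]
    refine not_exists_int_eq_of_pos_of_lt_one (by positivity) ?_
    rw [div_lt_one (by positivity)]
    exact_mod_cast Nat.succ_lt_succ (mem_range.mp hk)
  have hzero : logTwoSin ((0 : ℕ) * y) ((m + 1 : ℕ) * y) = -log ((m + 1 : ℕ) * y) :=
    logTwoSin_of_int ⟨0, by simp⟩
  rw [sum_range_succ', sum_logTwoSin_of_not_int _ _ _ hlt, hzero]
  simp only [hratio, prod_abs_two_sin_pi_mul_div]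
  rw [log_mul (by positivity) hy]
  push_cast
  ring

lemma sum_range_logTwoSin_of_not_int {n : ℕ} (hn : n ≠ 0) {x y : ℝ} (hy : y ≠ 0)
    (hx : ¬∃ k : ℤ, x / y = k) :
    ∑ r ∈ range n, logTwoSin (x + r * y) (n * y) = log |2 * sin (π * (x / y))| := by
  have hratio (r : ℕ) : (x + r * y) / (n * y) = (x / y + r) / n := by field_simp
  have hnot : ∀ r ∈ range n, ¬∃ k : ℤ, (x + r * y) / (n * y) = k := by
    rintro r - ⟨k, hk⟩
    refine hx ⟨k * n - r, ?_⟩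
    rw [hratio, div_eq_iff (by positivity)] at hk
    push_cast
    linarith
  rw [sum_logTwoSin_of_not_int _ _ _ hnot]
  simp only [hratio, prod_abs_two_sin_pi_mul_add_div hn]

theorem sum_range_logTwoSin {n : ℕ} (hn : n ≠ 0) (x : ℝ) {y : ℝ} (hy : y ≠ 0) :
    ∑ r ∈ range n, logTwoSin (x + r * y) (n * y) = logTwoSin x y := by
  by_cases hx : ∃ m : ℤ, x / y = m
  · obtain ⟨m, hm⟩ := hx
    rw [(div_eq_iff hy).mp hm]
    calc ∑ r ∈ range n, logTwoSin (m * y + r * y) (n * y)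
        = ∑ r ∈ range n, logTwoSin (0 + r * y) (n * y) :=
          (periodic_sum_range_logTwoSin n y).int_mul_eq m
      _ = -log y := by simpa only [zero_add] using sum_range_logTwoSin_mul_self hn hy
      _ = logTwoSin (m * y) y := (logTwoSin_of_int ⟨m, mul_div_cancel_right₀ _ hy⟩).symm
  · rw [sum_range_logTwoSin_of_not_int hn hy hx, logTwoSin_of_not_int hx]

theorem stmt_12 (f : ℝ → ℝ → ℝ)
    (hf1 : ∀ x y : ℝ, 0 < y → (¬ ∃ k : ℤ, x / y = (k : ℝ)) →
      f x y = Real.log |2 * Real.sin (π * x / y)|)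
    (hf2 : ∀ x y : ℝ, 0 < y → (∃ k : ℤ, x / y = (k : ℝ)) →
      f x y = -Real.log y) :
    ∀ n : ℕ, 0 < n → ∀ x y : ℝ, 0 < y →
      ∑ r ∈ Finset.range n, f (x + r * y) (n * y) = f x y := by
  intro n hn x y hy
  have hf (x y : ℝ) (hy : 0 < y) : f x y = logTwoSin x y := by
    by_cases hx : ∃ k : ℤ, x / y = k
    · rw [hf2 x y hy hx, logTwoSin_of_int hx]
    · rw [hf1 x y hy hx, logTwoSin_of_not_int hx, mul_div_assoc]
  rw [sum_congr rfl fun r _ => hf _ _ (by positivity), hf x y hy]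
  exact sum_range_logTwoSin hn.ne' x hy.ne'
end

section
/- Suppose f(x,y) is an invariant function that is integrable in x on closed intervals, and suppose lim_{a→0⁺} a·f(x,a) exists for each x. Then ∫_x^{x+y} f(t,y) dt = lim_{a→0⁺} a·f(x,a) for all x ∈ ℝ and y > 0. -/
open Filter Topology

lemma riemann_left_aux (g : ℝ → ℝ) (hg : Continuous g) (x y : ℝ) (hy : 0 < y) :
    Tendsto (fun n : ℕ => ∑ r ∈ Finset.range n, (y / n) * g (x + r * (y / n)))
      atTop (𝓝 (∫ t in x..(x + y), g t)) := by
  rw [Metric.tendsto_atTop]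
  intro ε hε
  have hUC : UniformContinuousOn g (Set.Icc x (x + y)) :=
    isCompact_Icc.uniformContinuousOn_of_continuous hg.continuousOn
  have hε' : (0:ℝ) < ε / (2 * y) := by positivity
  obtain ⟨δ, hδ, hδ'⟩ := Metric.uniformContinuousOn_iff.mp hUC _ hε'
  obtain ⟨N, hN⟩ := exists_nat_gt (y / δ)
  refine ⟨N + 1, fun n hn => ?_⟩
  have hn1 : 1 ≤ n := le_trans (Nat.le_add_left 1 N) hn
  have hnpos : (0:ℝ) < n := by exact_mod_cast hn1
  set h : ℝ := y / n with hh
  have hhpos : 0 < h := div_pos hy hnpos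
  have hn0 : (n:ℝ) ≠ 0 := hnpos.ne'
  have hy0 : y ≠ 0 := hy.ne'
  have hhδ : h < δ := by
    rw [hh, div_lt_iff₀ hnpos]
    have hNn : y / δ < n := lt_of_lt_of_le hN (by exact_mod_cast Nat.le_of_succ_le hn)
    rw [div_lt_iff₀ hδ] at hNn
    nlinarith
  have hnh : (n : ℝ) * h = y := by rw [hh]; field_simp
  set a : ℕ → ℝ := fun r => x + r * h with ha
  have haK : ∀ r : ℕ, r ≤ n → a r ∈ Set.Icc x (x + y) := by
    intro r hr
    have hr' : (r : ℝ) ≤ n := by exact_mod_cast hr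
    constructor
    · have h0 : (0:ℝ) ≤ (r:ℝ) * h := by positivity
      show x ≤ x + r * h
      linarith
    · simp only [ha, add_le_add_iff_left]
      calc (r:ℝ) * h ≤ n * h := by nlinarith
      _ = y := hnh
  have hint : ∀ k < n, IntervalIntegrable g MeasureTheory.volume (a k) (a (k + 1)) :=
    fun k _ => hg.intervalIntegrable _ _
  have hsplit : ∑ k ∈ Finset.range n, (∫ t in a k..a (k+1), g t) = ∫ t in x..(x+y), g t := by
    rw [intervalIntegral.sum_integral_adjacent_intervals hint]
    simp [ha, hnh]
  have hterm : ∀ r ∈ Finset.range n,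
      |(y / n) * g (x + r * (y / n)) - ∫ t in a r..a (r+1), g t| ≤ (ε / (2 * y)) * h := by
    intro r hr
    rw [Finset.mem_range] at hr
    have hdiff : a (r+1) - a r = h := by simp [ha]; ring
    have hc : (y / n) * g (x + r * (y / n)) = ∫ _ in a r..a (r+1), g (a r) := by
      rw [intervalIntegral.integral_const, hdiff]
      simp [ha, hh, smul_eq_mul, mul_comm]
    rw [hc, ← intervalIntegral.integral_sub (intervalIntegrable_const) (hg.intervalIntegrable _ _)]
    have hle : a r ≤ a (r+1) := by nlinarith [hdiff]
    have := intervalIntegral.norm_integral_le_of_norm_le_const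
      (C := ε / (2 * y)) (f := fun t => g (a r) - g t) (a := a r) (b := a (r+1)) ?_
    · rw [hdiff] at this
      simpa [abs_of_pos hhpos] using this
    · intro t ht
      rw [Set.uIoc_of_le hle] at ht
      have htK : t ∈ Set.Icc x (x + y) := by
        have h1 := (haK r hr.le).1
        have h2 := (haK (r+1) hr).2
        exact ⟨le_trans h1 ht.1.le, le_trans ht.2 h2⟩
      have hd : dist (a r) t < δ := by
        rw [Real.dist_eq, abs_of_nonpos (by linarith [ht.1])]
        linarith [ht.1, ht.2, hdiff]
      have := hδ' (a r) (haK r hr.le) t htK hd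
      rw [Real.dist_eq] at this
      simpa [Real.norm_eq_abs] using this.le
  rw [Real.dist_eq, ← hsplit, ← Finset.sum_sub_distrib]
  calc |∑ r ∈ Finset.range n, ((y / n) * g (x + r * (y / n)) - ∫ t in a r..a (r+1), g t)|
      ≤ ∑ r ∈ Finset.range n, |(y / n) * g (x + r * (y / n)) - ∫ t in a r..a (r+1), g t| :=
        Finset.abs_sum_le_sum_abs _ _
    _ ≤ ∑ _r ∈ Finset.range n, (ε / (2 * y)) * h := Finset.sum_le_sum hterm
    _ = n * ((ε / (2 * y)) * h) := by rw [Finset.sum_const, Finset.card_range]; ring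
    _ = ε / 2 := by rw [hh]; field_simp
    _ < ε := by linarith

theorem stmt_15 (f : ℝ → ℝ → ℝ)
    (hf : ∀ n : ℕ, 0 < n → ∀ x y : ℝ, 0 < y →
      ∑ r ∈ Finset.range n, f (x + r * y) (n * y) = f x y)
    (hcont : ∀ y : ℝ, 0 < y → Continuous (fun x => f x y))
    (L : ℝ → ℝ)
    (hL : ∀ x : ℝ, Filter.Tendsto (fun a => a * f x a)
      (nhdsWithin 0 (Set.Ioi 0)) (nhds (L x))) :
    ∀ x y : ℝ, 0 < y → ∫ t in x..(x + y), f t y = L x := by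
  intro x y hy
  have h1 : Tendsto (fun n : ℕ => ∑ r ∈ Finset.range n, (y / n) * f (x + r * (y / n)) y)
      atTop (𝓝 (∫ t in x..(x + y), f t y)) := riemann_left_aux _ (hcont y hy) x y hy
  have heq : ∀ᶠ n : ℕ in atTop,
      ∑ r ∈ Finset.range n, (y / n) * f (x + r * (y / n)) y = (y / n) * f x (y / n) := by
    filter_upwards [eventually_ge_atTop 1] with n hn
    have hnpos : (0:ℝ) < n := by exact_mod_cast hn
    have hyn : 0 < y / n := div_pos hy hnpos
    have := hf n hn x (y / n) hyn
    rw [show (n:ℝ) * (y / n) = y by field_simp] at this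
    rw [← Finset.mul_sum, this]
  have h2 : Tendsto (fun n : ℕ => (y / n) * f x (y / n)) atTop (𝓝 (L x)) := by
    have ht : Tendsto (fun n : ℕ => y / n) atTop (nhdsWithin 0 (Set.Ioi 0)) := by
      apply tendsto_nhdsWithin_of_tendsto_nhds_of_eventually_within
      · exact tendsto_const_div_atTop_nhds_zero_nat y
      · filter_upwards [eventually_ge_atTop 1] with n hn
        have : (0:ℝ) < n := by exact_mod_cast hn
        exact div_pos hy this
    exact (hL x).comp ht
  exact tendsto_nhds_unique (h1.congr' heq) h2
end

section
/- Suppose f(x,y) is an integrable invariant function such that ∂f/∂y exists and appropriate differentiation under the integral sign is valid. Then f(x,y) = ∫_x^{x-y} (∂f/∂y)(t,y) dt for all x ∈ ℝ, y > 0. -/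
open Filter Topology intervalIntegral

theorem stmt_16 (f g : ℝ → ℝ → ℝ)
    (hf : ∀ n : ℕ, 0 < n → ∀ x y : ℝ, 0 < y →
      ∑ r ∈ Finset.range n, f (x + r * y) (n * y) = f x y)
    (hcont : ∀ y : ℝ, 0 < y → Continuous (fun x => f x y))
    (hg : ∀ x y : ℝ, 0 < y → HasDerivAt (fun u => f x u) (g x y) y)
    (hgcont : ∀ y : ℝ, 0 < y → Continuous (fun x => g x y))
    (hL : ∀ x : ℝ, ∃ l : ℝ, Filter.Tendsto (fun a => a * f x a)
      (nhdsWithin 0 (Set.Ioi 0)) (nhds l))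
    (hLeibniz : ∀ x y : ℝ, 0 < y →
      HasDerivAt (fun u => ∫ t in x..(x + u), f t u)
        (f (x + y) y + ∫ t in x..(x + y), g t y) y) :
    ∀ x y : ℝ, 0 < y → f x y = ∫ t in x..(x - y), g t y := by
  -- For every fixed x, set φ y = ∫ t in x..x+y, f t y.
  have key : ∀ x y : ℝ, 0 < y → f (x + y) y + (∫ t in x..(x + y), g t y) = 0 := by
    intro x y hy
    set φ : ℝ → ℝ := fun u => ∫ t in x..(x + u), f t u with hφ
    -- Step A: φ (n * y) = φ y for all n ≥ 1, y > 0.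
    have stepA : ∀ (n : ℕ), 0 < n → ∀ z : ℝ, 0 < z → φ ((n : ℝ) * z) = φ z := by
      intro n hn z hz
      have hnz : (0:ℝ) < (n : ℝ) * z := by positivity
      have h1 : φ z = ∑ r ∈ Finset.range n,
          ∫ t in x..(x + z), f (t + r * z) ((n : ℝ) * z) := by
        rw [← intervalIntegral.integral_finset_sum]
        · apply intervalIntegral.integral_congr
          intro t _
          exact (hf n hn t z hz).symm
        · intro r _
          exact ((hcont _ hnz).comp (by continuity)).intervalIntegrable _ _
      have h2 : ∀ r : ℕ, (∫ t in x..(x + z), f (t + r * z) ((n : ℝ) * z))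
          = ∫ t in (x + r * z)..(x + (r + 1) * z), f t ((n : ℝ) * z) := by
        intro r
        rw [intervalIntegral.integral_comp_add_right (fun t => f t ((n:ℝ)*z)) (r * z)]
        ring_nf
      have h3 : ∑ r ∈ Finset.range n,
          (∫ t in (x + r * z)..(x + (r + 1) * z), f t ((n : ℝ) * z))
          = ∫ t in x..(x + n * z), f t ((n : ℝ) * z) := by
        have := intervalIntegral.sum_integral_adjacent_intervals
          (a := fun k : ℕ => x + k * z) (n := n)
          (f := fun t => f t ((n : ℝ) * z)) (μ := MeasureTheory.volume) ?_
        · simpa using this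
        · intro k _
          exact (hcont _ hnz).intervalIntegrable _ _
      rw [h1]
      simp_rw [h2]
      rw [h3]
    -- Step B: φ is constant on positive reals.
    have hcontφ : ∀ z : ℝ, 0 < z → ContinuousAt φ z := fun z hz =>
      (hLeibniz x z hz).continuousAt
    have stepQ : ∀ (q : ℚ), 0 < q → ∀ z : ℝ, 0 < z → φ ((q : ℝ) * z) = φ z := by
      intro q hq z hz
      have hden : (0:ℝ) < (q.den : ℝ) := by exact_mod_cast q.pos
      have hzd : 0 < z / q.den := by positivity
      have hnum : 0 < q.num := Rat.num_pos.mpr hq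
      have hnum' : 0 < q.num.toNat := by omega
      have e1 : (q : ℝ) * z = (q.num.toNat : ℝ) * (z / q.den) := by
        have hcast : ((q.num.toNat : ℕ) : ℝ) = (q.num : ℝ) := by
          exact_mod_cast Int.toNat_of_nonneg hnum.le
        rw [hcast, Rat.cast_def]
        ring
      rw [e1, stepA _ hnum' _ hzd, ← stepA q.den q.pos _ hzd]
      congr 1
      field_simp
    have const : ∀ z : ℝ, 0 < z → φ z = φ y := by
      intro z hz
      -- choose rationals q_k → z / y, q_k > 0
      have hzy : 0 < z / y := by positivity
      have hseq : ∀ k : ℕ, ∃ q : ℚ, z / y < (q:ℝ) ∧ (q:ℝ) < z / y + 1 / (k + 1) := by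
        intro k
        exact exists_rat_btwn (lt_add_of_pos_right _ (by positivity))
      choose q hq1 hq2 using hseq
      have hqpos : ∀ k, 0 < q k := fun k => by
        have : (0:ℝ) < ((q k : ℚ) : ℝ) := lt_trans hzy (hq1 k)
        exact_mod_cast this
      have htend : Tendsto (fun k : ℕ => ((q k : ℝ) * y)) atTop (𝓝 z) := by
        have h0 : Tendsto (fun k : ℕ => z / y + 1 / ((k:ℝ) + 1)) atTop (𝓝 (z / y)) := by
          simpa using (tendsto_const_nhds (x := z/y)).add
            (tendsto_one_div_add_atTop_nhds_zero_nat)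
        have hq : Tendsto (fun k : ℕ => (q k : ℝ)) atTop (𝓝 (z / y)) :=
          tendsto_of_tendsto_of_tendsto_of_le_of_le tendsto_const_nhds h0
            (fun k => (hq1 k).le) (fun k => (hq2 k).le)
        have := hq.mul_const y
        simpa [div_mul_cancel₀ _ hy.ne'] using this
      have heq : ∀ k, φ ((q k : ℝ) * y) = φ y := fun k => stepQ (q k) (hqpos k) y hy
      have : Tendsto (fun k : ℕ => φ ((q k : ℝ) * y)) atTop (𝓝 (φ z)) :=
        ((hcontφ z hz).tendsto).comp htend
      rw [funext heq] at this
      exact (tendsto_const_nhds_iff.mp this).symm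
    -- Step C: derivative of constant is 0.
    have hconst_nhds : φ =ᶠ[𝓝 y] fun _ => φ y := by
      filter_upwards [Ioi_mem_nhds hy] with z hz
      exact const z hz
    have hD : HasDerivAt φ (f (x + y) y + ∫ t in x..(x + y), g t y) y := hLeibniz x y hy
    have hD0 : HasDerivAt φ 0 y :=
      (hasDerivAt_const y (φ y)).congr_of_eventuallyEq hconst_nhds
    exact hD.unique hD0
  intro x y hy
  have h := key (x - y) y hy
  rw [sub_add_cancel] at h
  rw [intervalIntegral.integral_symm]
  linarith
end

section
/- Let g, h : ℝ × ℝ₊ → ℝ be invariant functions, integrable in the first variable on closed intervals, and define g*h(x,y) = ∫_0^x g(t,y)h(x-t,y) dt + ∫_x^y g(t,y)h(x+y-t,y) dt. Then ∫_0^y (g*h)(x,y) dx = (∫_0^y g(x,y) dx)·(∫_0^y h(x,y) dx) for all y > 0. -/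
open MeasureTheory intervalIntegral Set

theorem stmt_18 (g h : ℝ → ℝ → ℝ)
    (hg : ∀ n : ℕ, 0 < n → ∀ x y : ℝ, 0 < y →
      ∑ r ∈ Finset.range n, g (x + r * y) (n * y) = g x y)
    (hh : ∀ n : ℕ, 0 < n → ∀ x y : ℝ, 0 < y →
      ∑ r ∈ Finset.range n, h (x + r * y) (n * y) = h x y)
    (hgc : ∀ y : ℝ, 0 < y → Continuous (fun x => g x y))
    (hhc : ∀ y : ℝ, 0 < y → Continuous (fun x => h x y)) :
    ∀ y : ℝ, 0 < y →
      (∫ x in (0:ℝ)..y,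
          ((∫ t in (0:ℝ)..x, g t y * h (x - t) y) +
            ∫ t in x..y, g t y * h (x + y - t) y))
        = (∫ x in (0:ℝ)..y, g x y) * ∫ x in (0:ℝ)..y, h x y := by
  intro y hy
  have hy' : (0:ℝ) ≤ y := hy.le
  set C : ℝ → ℝ → ℝ := fun x t => if t ≤ x then g t y * h (x - t) y
    else g t y * h (x + y - t) y with hC
  have hgm : Continuous (fun x => g x y) := hgc y hy
  have hhm : Continuous (fun x => h x y) := hhc y hy
  -- Step 1: rewrite the integrand as ∫ t in 0..y, C x t
  have step1 : ∀ x ∈ Icc (0:ℝ) y,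
      ((∫ t in (0:ℝ)..x, g t y * h (x - t) y) +
        ∫ t in x..y, g t y * h (x + y - t) y) = ∫ t in (0:ℝ)..y, C x t := by
    intro x hx
    have hx0 : (0:ℝ) ≤ x := hx.1
    have hxy : x ≤ y := hx.2
    have e1 : (∫ t in (0:ℝ)..x, g t y * h (x - t) y) = ∫ t in (0:ℝ)..x, C x t := by
      rw [integral_of_le hx0, integral_of_le hx0]
      refine setIntegral_congr_fun measurableSet_Ioc fun t ht => ?_
      simp [hC, ht.2]
    have e2 : (∫ t in x..y, g t y * h (x + y - t) y) = ∫ t in x..y, C x t := by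
      rw [integral_of_le hxy, integral_of_le hxy]
      refine setIntegral_congr_fun measurableSet_Ioc fun t ht => ?_
      simp [hC, not_le.mpr ht.1]
    rw [e1, e2]
    have i1 : IntervalIntegrable (C x) volume 0 x := by
      rw [intervalIntegrable_iff_integrableOn_Ioc_of_le hx0]
      have hcont : IntegrableOn (fun t => g t y * h (x - t) y) (Ioc 0 x) volume :=
        ((hgm.mul (hhm.comp (continuous_const.sub continuous_id))).integrableOn_Ioc)
      exact hcont.congr_fun (fun t ht => by simp [hC, ht.2]) measurableSet_Ioc
    have i2 : IntervalIntegrable (C x) volume x y := by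
      rw [intervalIntegrable_iff_integrableOn_Ioc_of_le hxy]
      have hcont : IntegrableOn (fun t => g t y * h (x + y - t) y) (Ioc x y) volume :=
        ((hgm.mul (hhm.comp (continuous_const.sub continuous_id))).integrableOn_Ioc)
      exact hcont.congr_fun (fun t ht => by simp [hC, not_le.mpr ht.1]) measurableSet_Ioc
    exact integral_add_adjacent_intervals i1 i2
  -- Step 2: integrability of C on the product square
  have hmeas : Measurable (fun p : ℝ × ℝ => C p.1 p.2) := by
    refine Measurable.ite (measurableSet_le measurable_snd measurable_fst) ?_ ?_
    · exact ((hgm.measurable.comp measurable_snd).mul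
        (hhm.measurable.comp (measurable_fst.sub measurable_snd)))
    · exact ((hgm.measurable.comp measurable_snd).mul
        (hhm.measurable.comp ((measurable_fst.add_const y).sub measurable_snd)))
  obtain ⟨Mg, hMg⟩ := (isCompact_Icc (a := (0:ℝ)) (b := y)).exists_bound_of_continuousOn
    hgm.continuousOn
  obtain ⟨Mh, hMh⟩ := (isCompact_Icc (a := -y) (b := 2*y)).exists_bound_of_continuousOn
    hhm.continuousOn
  have hMg0 : 0 ≤ Mg := le_trans (norm_nonneg _) (hMg 0 ⟨le_refl _, hy'⟩)
  have hMh0 : 0 ≤ Mh := le_trans (norm_nonneg _)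
    (hMh 0 ⟨by linarith, by linarith⟩)
  have hbound : ∀ p : ℝ × ℝ, p ∈ Ioc (0:ℝ) y ×ˢ Ioc (0:ℝ) y →
      ‖C p.1 p.2‖ ≤ Mg * Mh := by
    rintro ⟨x, t⟩ ⟨hx, ht⟩
    have hgb : ‖g t y‖ ≤ Mg := hMg t ⟨ht.1.le, ht.2⟩
    have key : ∀ s ∈ Icc (-y) (2*y), ‖g t y * h s y‖ ≤ Mg * Mh := by
      intro s hs
      rw [norm_mul]
      exact mul_le_mul hgb (hMh s hs) (norm_nonneg _) hMg0
    by_cases hle : t ≤ x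
    · simpa [hC, hle] using key (x - t) ⟨by simp at hx ht ⊢; linarith, by simp at hx ht ⊢; linarith⟩
    · simpa [hC, hle] using key (x + y - t) ⟨by simp at hx ht ⊢; linarith, by simp at hx ht ⊢; linarith⟩
  have hfin : IsFiniteMeasure (volume.restrict (Ioc (0:ℝ) y)) := by
    constructor
    rw [Measure.restrict_apply_univ, Real.volume_Ioc]
    exact ENNReal.ofReal_lt_top
  have hint : Integrable (fun p : ℝ × ℝ => C p.1 p.2)
      ((volume.restrict (Ioc (0:ℝ) y)).prod (volume.restrict (Ioc (0:ℝ) y))) := by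
    refine Integrable.mono' (integrable_const (Mg * Mh)) hmeas.aestronglyMeasurable ?_
    rw [Measure.prod_restrict]
    exact (ae_restrict_mem (measurableSet_Ioc.prod measurableSet_Ioc)).mono hbound
  -- Step 4: inner integral over x for fixed t
  have step4 : ∀ t ∈ Ioc (0:ℝ) y,
      (∫ x in (0:ℝ)..y, C x t) = g t y * ∫ s in (0:ℝ)..y, h s y := by
    intro t ht
    have ht0 : (0:ℝ) ≤ t := ht.1.le
    have hty : t ≤ y := ht.2
    have e1 : (∫ x in (0:ℝ)..t, C x t) = ∫ x in (0:ℝ)..t, g t y * h (x + y - t) y := by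
      rw [integral_of_le ht0, integral_of_le ht0]
      refine setIntegral_congr_ae measurableSet_Ioc ?_
      have hane : ∀ᵐ x : ℝ, x ≠ t := by
        have : volume ({t} : Set ℝ) = 0 := Real.volume_singleton
        exact (compl_mem_ae_iff.mpr this)
      filter_upwards [hane] with x hne hmem
      have : ¬ t ≤ x := by
        rcases hmem with ⟨_, hxt⟩
        exact fun hc => hne (le_antisymm hxt hc)
      simp [hC, this]
    have e2 : (∫ x in t..y, C x t) = ∫ x in t..y, g t y * h (x - t) y := by
      refine integral_congr (f := fun x => C x t)
        (g := fun x => g t y * h (x - t) y) fun x hx => ?_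
      rw [uIcc_of_le hty] at hx
      simp [hC, hx.1]
    have s1 : (∫ x in (0:ℝ)..t, g t y * h (x + y - t) y)
        = g t y * ∫ s in (y - t)..y, h s y := by
      rw [← intervalIntegral.integral_const_mul]
      have : ∀ x, g t y * h (x + y - t) y = (fun s => g t y * h s y) (x + (y - t)) := by
        intro x; ring_nf
      simp_rw [this]
      rw [intervalIntegral.integral_comp_add_right (fun s => g t y * h s y) (y - t)]
      rw [intervalIntegral.integral_const_mul]
      norm_num
    have s2 : (∫ x in t..y, g t y * h (x - t) y)
        = g t y * ∫ s in (0:ℝ)..(y - t), h s y := by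
      rw [← intervalIntegral.integral_const_mul]
      rw [intervalIntegral.integral_comp_sub_right (fun s => g t y * h s y) t]
      rw [intervalIntegral.integral_const_mul]
      norm_num
    have i1 : IntervalIntegrable (fun x => C x t) volume 0 t := by
      rw [intervalIntegrable_iff_integrableOn_Ioc_of_le ht0]
      have hcont : IntegrableOn (fun x => g t y * h (x + y - t) y) (Ioc 0 t) volume :=
        ((continuous_const.mul
          (hhm.comp ((continuous_id.add continuous_const).sub continuous_const))).integrableOn_Ioc)
      refine hcont.integrable.congr ?_
      have hane : ∀ᵐ x ∂(volume.restrict (Ioc (0:ℝ) t)), x ≠ t :=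
        ae_restrict_of_ae (compl_mem_ae_iff.mpr Real.volume_singleton)
      filter_upwards [hane, ae_restrict_mem measurableSet_Ioc] with x hne hmem
      have hnle : ¬ t ≤ x := fun hc => hne (le_antisymm hmem.2 hc)
      simp [hC, hnle]
    have i2 : IntervalIntegrable (fun x => C x t) volume t y := by
      rw [intervalIntegrable_iff_integrableOn_Ioc_of_le hty]
      have hcont : IntegrableOn (fun x => g t y * h (x - t) y) (Ioc t y) volume :=
        ((continuous_const.mul
          (hhm.comp (continuous_id.sub continuous_const))).integrableOn_Ioc)
      exact hcont.congr_fun (fun x hx => by simp [hC, hx.1.le]) measurableSet_Ioc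
    have hsplit := integral_add_adjacent_intervals i1 i2
    have hih : IntervalIntegrable (fun s => h s y) volume 0 (y - t) ∧
        IntervalIntegrable (fun s => h s y) volume (y-t) y :=
      ⟨hhm.intervalIntegrable _ _, hhm.intervalIntegrable _ _⟩
    have hh2 : (∫ s in (y - t)..y, h s y) + (∫ s in (0:ℝ)..(y-t), h s y)
        = ∫ s in (0:ℝ)..y, h s y := by
      rw [add_comm]
      exact integral_add_adjacent_intervals hih.1 hih.2
    calc (∫ x in (0:ℝ)..y, C x t)
        = (∫ x in (0:ℝ)..t, C x t) + ∫ x in t..y, C x t := hsplit.symm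
      _ = g t y * ((∫ s in (y - t)..y, h s y) + ∫ s in (0:ℝ)..(y-t), h s y) := by
          rw [e1, e2, s1, s2]; ring
      _ = g t y * ∫ s in (0:ℝ)..y, h s y := by rw [hh2]
  -- Assemble
  calc (∫ x in (0:ℝ)..y,
          ((∫ t in (0:ℝ)..x, g t y * h (x - t) y) +
            ∫ t in x..y, g t y * h (x + y - t) y))
      = ∫ x in (0:ℝ)..y, ∫ t in (0:ℝ)..y, C x t := by
        refine integral_congr ?_
        rw [uIcc_of_le hy']
        exact fun x hx => step1 x hx
    _ = ∫ x in Ioc (0:ℝ) y, ∫ t in Ioc (0:ℝ) y, C x t := by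
        rw [integral_of_le hy']
        exact setIntegral_congr_fun measurableSet_Ioc fun x _ => integral_of_le hy'
    _ = ∫ t in Ioc (0:ℝ) y, ∫ x in Ioc (0:ℝ) y, C x t :=
        MeasureTheory.integral_integral_swap hint
    _ = ∫ t in Ioc (0:ℝ) y, g t y * ∫ s in (0:ℝ)..y, h s y := by
        refine setIntegral_congr_fun measurableSet_Ioc fun t ht => ?_
        rw [← integral_of_le hy']
        exact step4 t ht
    _ = (∫ t in Ioc (0:ℝ) y, g t y) * ∫ s in (0:ℝ)..y, h s y := by
        rw [MeasureTheory.integral_mul_const]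
    _ = (∫ x in (0:ℝ)..y, g x y) * ∫ x in (0:ℝ)..y, h x y := by
        rw [← integral_of_le hy']
end

section
/- For all positive integers m and n and all real x, B_{m+n}(x) = -C(m+n, m)·( ∫_0^1 B_m(x-t) B_n(t) dt + m·∫_x^1 (x-t)^{m-1} B_n(t) dt ), where B_k denotes the k-th Bernoulli polynomial and C(m+n,m) is the binomial coefficient. -/
/-!
Write `S_{m,n}(x)` for the bracketed sum of the two integrals. Since
`B_m(1 + y) = B_m(y) + m y^{m-1}`, the second integral merges with the part of the first over
`[x, 1]`, so that `S_{m,n}(x)` becomes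
`∫₀ˣ B_m(x - t) B_n(t) dt + ∫ₓ¹ B_m(x + 1 - t) B_n(t) dt`. Integrating both pieces by parts,
moving a derivative from `B_{m+1}` onto `B_{n+2}`, the boundary terms collapse, because
`B_{n+2}(0) = B_{n+2}(1)`, to `(B_{m+1}(0) - B_{m+1}(1)) B_{n+2}(x)`, which is `-B_{n+2}(x)` for
`m = 0` and `0` otherwise. Hence `(n + 2) S_{m+1,n+1} = (m + 1) S_{m,n+2}` for `m ≥ 1`, while
`(n + 1) S_{1,n} = -B_{n+1}` because `S_{0,n} = ∫₀¹ B_n = 0`; induction on `m` finishes, the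
binomial coefficient arising from `(m + 1) C(N, m + 1) = (N - m) C(N, m)`.
-/

open intervalIntegral

theorem bernoulliFun_one_add (k : ℕ) (y : ℝ) :
    bernoulliFun k (1 + y) = bernoulliFun k y + k * y ^ (k - 1) := by
  simpa [bernoulliFun, Polynomial.eval_map_algebraMap, Polynomial.aeval_comp] using
    congr_arg (·.aeval y) (Polynomial.bernoulli_comp_one_add_X k)

theorem mul_integral_bernoulliFun_sub_mul_bernoulliFun (m n : ℕ) (c a b : ℝ) :
    (n + 1 : ℝ) * ∫ t in a..b, bernoulliFun (m + 1) (c - t) * bernoulliFun n t =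
      bernoulliFun (m + 1) (c - b) * bernoulliFun (n + 1) b
        - bernoulliFun (m + 1) (c - a) * bernoulliFun (n + 1) a
        + (m + 1 : ℝ) * ∫ t in a..b, bernoulliFun m (c - t) * bernoulliFun (n + 1) t := by
  have hu (t : ℝ) : HasDerivAt (fun s ↦ bernoulliFun (m + 1) (c - s))
      (-((m + 1 : ℝ) * bernoulliFun m (c - t))) t := by
    simpa [Function.comp_def] using
      (hasDerivAt_bernoulliFun (m + 1) (c - t)).comp t ((hasDerivAt_id t).const_sub c)
  have hv (t : ℝ) : HasDerivAt (bernoulliFun (n + 1)) ((n + 1 : ℝ) * bernoulliFun n t) t := by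
    simpa using hasDerivAt_bernoulliFun (n + 1) t
  have ibp := integral_mul_deriv_eq_deriv_mul (a := a) (b := b) (fun t _ ↦ hu t) (fun t _ ↦ hv t)
    (Continuous.intervalIntegrable (by fun_prop) _ _)
    (Continuous.intervalIntegrable (by fun_prop) _ _)
  simp only [mul_left_comm _ (n + 1 : ℝ), neg_mul, mul_assoc, integral_const_mul,
    integral_neg] at ibp
  rw [ibp, sub_neg_eq_add]

/-- For `x ∈ [0, 1]`, the convolution on `ℝ/ℤ` of `B_n` with the `1`-periodic extension of
`B_m` restricted to `[0, 1)`. -/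
noncomputable def bernoulliConv (m n : ℕ) (x : ℝ) : ℝ :=
  (∫ t in 0..x, bernoulliFun m (x - t) * bernoulliFun n t) +
    ∫ t in x..1, bernoulliFun m (x + 1 - t) * bernoulliFun n t

theorem integral_bernoulliFun_sub_mul_add_integral_pow_mul_eq_bernoulliConv (m n : ℕ) (x : ℝ) :
    (∫ t in (0 : ℝ)..1, bernoulliFun m (x - t) * bernoulliFun n t) +
        m * ∫ t in x..1, (x - t) ^ (m - 1) * bernoulliFun n t =
      bernoulliConv m n x := by
  have hInt {f : ℝ → ℝ} (hf : Continuous f) (a b : ℝ) :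
      IntervalIntegrable f MeasureTheory.volume a b :=
    hf.intervalIntegrable a b
  rw [bernoulliConv, ← integral_add_adjacent_intervals (b := x) (hInt (by fun_prop) _ _)
    (hInt (by fun_prop) _ _), ← integral_const_mul, add_assoc,
    ← integral_add (hInt (by fun_prop) _ _) (hInt (by fun_prop) _ _)]
  congr 2 with t
  rw [show x + 1 - t = 1 + (x - t) by ring, bernoulliFun_one_add]
  ring

theorem bernoulliConv_zero_left {n : ℕ} (hn : n ≠ 0) (x : ℝ) : bernoulliConv 0 n x = 0 := by
  simp only [bernoulliConv, bernoulliFun_zero, one_mul]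
  rw [integral_add_adjacent_intervals ((continuous_bernoulliFun n).intervalIntegrable _ _)
    ((continuous_bernoulliFun n).intervalIntegrable _ _), integral_bernoulliFun_eq_zero hn]

theorem bernoulliConv_succ_succ (m n : ℕ) (x : ℝ) :
    (n + 2 : ℝ) * bernoulliConv (m + 1) (n + 1) x =
      (m + 1 : ℝ) * bernoulliConv m (n + 2) x
        - (bernoulliFun (m + 1) 1 - bernoulliFun (m + 1) 0) * bernoulliFun (n + 2) x := by
  have ibp := mul_integral_bernoulliFun_sub_mul_bernoulliFun m (n + 1)
  simp only [Nat.cast_add_one, add_assoc, one_add_one_eq_two] at ibp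
  rw [bernoulliConv, bernoulliConv, mul_add, mul_add,
    ibp, ibp, bernoulliFun_endpoints_eq_of_ne_one (k := n + 2) (by omega)]
  simp only [sub_self, sub_zero, add_sub_cancel_left, add_sub_cancel_right]
  ring

theorem choose_mul_bernoulliConv {m n : ℕ} (hm : 0 < m) (hn : 0 < n) (x : ℝ) :
    ((m + n).choose m : ℝ) * bernoulliConv m n x = -bernoulliFun (m + n) x := by
  obtain ⟨m, rfl⟩ : ∃ k, m = k + 1 := ⟨m - 1, by omega⟩
  obtain ⟨n, rfl⟩ : ∃ k, n = k + 1 := ⟨n - 1, by omega⟩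
  clear hm hn
  induction m generalizing n with
  | zero =>
    have hrec := bernoulliConv_succ_succ 0 n x
    rw [bernoulliConv_zero_left (by omega), bernoulliFun_eval_one, if_pos rfl] at hrec
    rw [zero_add, show 1 + (n + 1) = n + 2 by omega, Nat.choose_one_right]
    push_cast at hrec ⊢
    linear_combination hrec
  | succ m ih =>
    have hrec := bernoulliConv_succ_succ (m + 1) n x
    rw [bernoulliFun_endpoints_eq_of_ne_one (by omega), sub_self, zero_mul, sub_zero] at hrec
    have hch := Nat.choose_succ_right_eq (m + 1 + (n + 2)) (m + 1)
    have ih' := ih (n + 1)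
    rw [show m + 1 + (n + 2) - (m + 1) = n + 2 by omega] at hch
    rw [show n + 1 + 1 = n + 2 from rfl] at ih'
    rw [show m + 1 + 1 + (n + 1) = m + 1 + (n + 2) by omega]
    apply mul_left_cancel₀ (show (n + 2 : ℝ) ≠ 0 by positivity)
    have hch' := congr(((·) : ℕ → ℝ) $hch)
    push_cast at hch' hrec ⊢
    linear_combination ((m + 1 + (n + 2)).choose (m + 1 + 1) : ℝ) * hrec + (n + 2 : ℝ) * ih' +
      bernoulliConv (m + 1) (n + 2) x * hch'

theorem stmt_19 (m n : ℕ) (hm : 0 < m) (hn : 0 < n) (x : ℝ) :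
    ((Polynomial.bernoulli (m + n)).map (algebraMap ℚ ℝ)).eval x
      = -(Nat.choose (m + n) m : ℝ) *
        ((∫ t in (0:ℝ)..1,
            ((Polynomial.bernoulli m).map (algebraMap ℚ ℝ)).eval (x - t) *
              ((Polynomial.bernoulli n).map (algebraMap ℚ ℝ)).eval t) +
          m * ∫ t in x..1,
            (x - t) ^ (m - 1) *
              ((Polynomial.bernoulli n).map (algebraMap ℚ ℝ)).eval t) := by
  change bernoulliFun (m + n) x = -_ *
    ((∫ t in (0 : ℝ)..1, bernoulliFun m (x - t) * bernoulliFun n t) +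
      m * ∫ t in x..1, (x - t) ^ (m - 1) * bernoulliFun n t)
  rw [integral_bernoulliFun_sub_mul_add_integral_pow_mul_eq_bernoulliConv, neg_mul,
    choose_mul_bernoulliConv hm hn, neg_neg]
end
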